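/- Let V and W be finite-dimensional vector spaces over a field F with bases α and β respectively. If Γ(V_α) and Γ(W_β) are isomorphic as graphs, then V and W are isomorphic as vector spaces. -/

import Mathlib

/-!
The basis vectors are pairwise non-adjacent in `NZCG b`, and a family of pairwise non-adjacent
vertices has pairwise disjoint non-empty supports, so it has at most `n` members. A graph
isomorphism carries the `n` basis vertices of `NZCG bα` to such a family in `NZCG bβ`, hence
`n ≤ k`, and symmetrically `k ≤ n`.
-/

/-- The non-zero component graph of a vector space `V` with respect to a basis `b`:
vertices are the non-zero vectors, and two distinct vectors are adjacent iff they have a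
common basis vector with non-zero coefficient in their basis representations. -/
def NZCG {F V : Type*} [Field F] [AddCommGroup V] [Module F V] {n : ℕ}
    (b : Module.Basis (Fin n) F V) : SimpleGraph {v : V // v ≠ 0} where
  Adj x y := x ≠ y ∧ ∃ i, b.repr x.1 i ≠ 0 ∧ b.repr y.1 i ≠ 0
  symm := by
    constructor
    rintro x y ⟨hxy, i, h1, h2⟩
    exact ⟨hxy.symm, i, h2, h1⟩
  loopless := by
    constructor
    rintro x ⟨h, _⟩
    exact h rfl

namespace NZCG

variable {F V W : Type*} [Field F] [AddCommGroup V] [Module F V] [AddCommGroup W] [Module F W]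
  {n k : ℕ}

noncomputable def basisVertex (b : Module.Basis (Fin n) F V) (i : Fin n) : {v : V // v ≠ 0} :=
  ⟨b i, b.ne_zero i⟩

lemma basisVertex_injective (b : Module.Basis (Fin n) F V) : Function.Injective (basisVertex b) :=
  fun _ _ h => b.injective (congrArg Subtype.val h)

lemma not_adj_basisVertex (b : Module.Basis (Fin n) F V) (i j : Fin n) :
    ¬ (NZCG b).Adj (basisVertex b i) (basisVertex b j) := by
  rintro ⟨hne, m, hi, hj⟩
  simp only [basisVertex, Module.Basis.repr_self, Finsupp.single_apply, ne_eq,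
    ite_eq_right_iff, one_ne_zero, imp_false, not_not] at hi hj
  exact hne (by rw [hi, hj])

lemma exists_repr_ne_zero (b : Module.Basis (Fin n) F V) (x : {v : V // v ≠ 0}) :
    ∃ i, b.repr x.1 i ≠ 0 := by
  by_contra! h
  exact x.2 (b.repr.map_eq_zero_iff.mp (Finsupp.ext h))

lemma card_le_of_forall_not_adj {ι : Type*} [Fintype ι] (b : Module.Basis (Fin n) F V)
    (f : ι → {v : V // v ≠ 0}) (hf : Function.Injective f)
    (hadj : ∀ i j, ¬ (NZCG b).Adj (f i) (f j)) : Fintype.card ι ≤ n := by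
  choose φ hφ using fun i => exists_repr_ne_zero b (f i)
  have hφ_inj : Function.Injective φ := by
    intro i j hij
    by_contra hne
    exact hadj i j ⟨hf.ne hne, φ i, hφ i, hij ▸ hφ j⟩
  simpa using Fintype.card_le_of_injective φ hφ_inj

lemma le_of_iso (b : Module.Basis (Fin n) F V) (c : Module.Basis (Fin k) F W)
    (e : NZCG b ≃g NZCG c) : n ≤ k := by
  simpa using card_le_of_forall_not_adj c (e ∘ basisVertex b)
    (e.injective.comp (basisVertex_injective b))
    (fun i j => e.map_adj_iff.not.mpr (not_adj_basisVertex b i j))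

end NZCG

theorem nzcg_graph_iso_implies_linear_equiv {F V W : Type*} [Field F] [AddCommGroup V]
    [Module F V] [AddCommGroup W] [Module F W] {n k : ℕ}
    (bα : Module.Basis (Fin n) F V) (bβ : Module.Basis (Fin k) F W)
    (h : Nonempty (NZCG bα ≃g NZCG bβ)) : Nonempty (V ≃ₗ[F] W) := by
  obtain ⟨e⟩ := h
  exact ⟨bα.equiv bβ <| finCongr <|
    le_antisymm (NZCG.le_of_iso bα bβ e) (NZCG.le_of_iso bβ bα e.symm)⟩
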